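/- arXiv:2203.13083 — 3 statements merged into one kernel-verified Lean document; each statement's English description precedes it below -/
import Mathlib

section
/- If T0 = Sequence(T1, T2) with influence regions I1 = I0 and I2 = I0 ∩ S1, and operating regions Ωi = Ii ∩ Ri, then Ω1 and Ω2 are disjoint and Ω1 ∪ Ω2 = Ω0. -/
/-- If `T0 = Sequence(T1, T2)` with influence regions `I1 = I0` and
`I2 = I0 ∩ S1`, and operating regions `Ωi = Ii ∩ Ri`, then `Ω1` and `Ω2` are
disjoint and `Ω1 ∪ Ω2 = Ω0`. Here `Ri, Si, Fi` partition the state space `X`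
for each child, and `R0 = R1 ∪ (S1 ∩ R2)` for a Sequence node. -/
theorem seq_operating_partition {X : Type*}
    (R1 S1 F1 R2 S2 F2 R0 : Set X)
    (hcov1 : R1 ∪ S1 ∪ F1 = Set.univ) (hRS1 : R1 ∩ S1 = ∅)
    (hRF1 : R1 ∩ F1 = ∅) (hSF1 : S1 ∩ F1 = ∅)
    (hcov2 : R2 ∪ S2 ∪ F2 = Set.univ) (hRS2 : R2 ∩ S2 = ∅)
    (hRF2 : R2 ∩ F2 = ∅) (hSF2 : S2 ∩ F2 = ∅)
    (hR0 : R0 = R1 ∪ (S1 ∩ R2))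
    (I0 I1 I2 Ω0 Ω1 Ω2 : Set X)
    (hI1 : I1 = I0) (hI2 : I2 = I0 ∩ S1)
    (hΩ0 : Ω0 = I0 ∩ R0) (hΩ1 : Ω1 = I1 ∩ R1) (hΩ2 : Ω2 = I2 ∩ R2) :
    Ω1 ∩ Ω2 = ∅ ∧ Ω1 ∪ Ω2 = Ω0 := by
  subst hR0 hI1 hI2 hΩ0 hΩ1 hΩ2
  constructor <;> ext x <;>
    have h1 := Set.eq_empty_iff_forall_notMem.mp hRS1 x <;>
    simp only [Set.mem_inter_iff, Set.mem_union, Set.mem_empty_iff_false, iff_false] at * <;>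
    tauto
end

section
/- (Convergence of behavior trees, discrete time) Suppose the state space X is partitioned (relative to an invariant constraint set C̄) into operating regions Ω1, ..., ΩN and a success region S0, and for each i the set Ci = ((∪_{j ≥ i} Ωj) ∪ S0) ∩ C̄ is invariant under the dynamics executed while in Ωi. If additionally there exists τ > 0 (a natural number in discrete time) such that whenever x(t) ∈ Ωi then x(t+τ) ∉ Ωi, then for any initial state x(0) ∈ C1 there exists a time t' ≤ Nτ with x(t') ∈ S0. -/
/-- Convergence of behavior trees, discrete time. The state space
is partitioned, relative to the invariant external constraint set `C̄`, into
operating regions `Ω1, …, ΩN` and the success region `S0` (pairwise disjoint).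
While in `Ωi` the trajectory follows the dynamics `f i`. If each
`Cᵢ = ((⋃_{j ≥ i} Ωj) ∪ S0) ∩ C̄` is invariant under `f i`, and there is `τ > 0`
such that `x(t) ∈ Ωi` implies `x(t+τ) ∉ Ωi`, then any trajectory starting in
`C1` reaches `S0` at some time `t' ≤ Nτ`. -/
theorem bt_convergence {X : Type*} (N τ : ℕ) (hτ : 0 < τ)
    (Ω : ℕ → Set X) (S0 Cbar : Set X)
    (f : ℕ → X → X) (x : ℕ → X) (C : ℕ → Set X)
    (hC : ∀ i, C i = ((⋃ j ∈ Finset.Icc i N, Ω j) ∪ S0) ∩ Cbar)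
    (hdisj : ∀ i ∈ Finset.Icc 1 N, ∀ j ∈ Finset.Icc 1 N, i ≠ j → Ω i ∩ Ω j = ∅)
    (hdisjS : ∀ i ∈ Finset.Icc 1 N, Ω i ∩ S0 = ∅)
    (hstep : ∀ t : ℕ, ∀ i ∈ Finset.Icc 1 N, x t ∈ Ω i → x (t + 1) = f i (x t))
    (hinv : ∀ i ∈ Finset.Icc 1 N, ∀ y ∈ C i, f i y ∈ C i)
    (hdwell : ∀ t : ℕ, ∀ i ∈ Finset.Icc 1 N, x t ∈ Ω i → x (t + τ) ∉ Ω i)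
    (hx0 : x 0 ∈ C 1) :
    ∃ t' ≤ N * τ, x t' ∈ S0 := by
  classical
  -- Key step: from `C i` we reach `C (i+1)` within `τ` steps.
  have key : ∀ i ∈ Finset.Icc 1 N, ∀ t, x t ∈ C i →
      ∃ s ≤ τ, x (t + s) ∈ C (i + 1) := by
    intro i hi t hxt
    have hex : ∃ s, x (t + s) ∉ Ω i := by
      by_cases h0 : x t ∈ Ω i
      · exact ⟨τ, hdwell t i hi h0⟩
      · exact ⟨0, h0⟩
    set s := Nat.find hex with hs_def
    have hsτ : s ≤ τ := by
      by_cases h0 : x t ∈ Ω i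
      · exact Nat.find_le (hdwell t i hi h0)
      · have : s ≤ 0 := Nat.find_le (by simpa using h0)
        omega
    have hin : ∀ s' ≤ s, x (t + s') ∈ C i := by
      intro s' hs'
      induction s' with
      | zero => simpa using hxt
      | succ k ih =>
        have hk : x (t + k) ∈ C i := ih (by omega)
        have hΩ : x (t + k) ∈ Ω i := by
          by_contra hno
          have : s ≤ k := Nat.find_le hno
          omega
        have hst := hstep (t + k) i hi hΩ
        have : x (t + (k + 1)) = f i (x (t + k)) := by
          rw [← hst]; ring_nf
        rw [this]
        exact hinv i hi _ hk
    have hout : x (t + s) ∉ Ω i := Nat.find_spec hex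
    have hCi : x (t + s) ∈ C i := hin s le_rfl
    refine ⟨s, hsτ, ?_⟩
    rw [hC i] at hCi
    rw [hC (i + 1)]
    obtain ⟨hu, hcb⟩ := hCi
    refine ⟨?_, hcb⟩
    rcases hu with hu | hs0
    · left
      simp only [Set.mem_iUnion, exists_prop] at hu ⊢
      obtain ⟨j, hj, hxj⟩ := hu
      simp only [Finset.mem_Icc] at hj
      have hne : j ≠ i := by rintro rfl; exact hout hxj
      exact ⟨j, by simp only [Finset.mem_Icc]; omega, hxj⟩
    · right; exact hs0
  -- Main induction: from `C i` with `i + d = N + 1` we reach `S0` within `d * τ`.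
  have main : ∀ d i, 1 ≤ i → i + d = N + 1 → ∀ t, x t ∈ C i →
      ∃ s ≤ d * τ, x (t + s) ∈ S0 := by
    intro d
    induction d with
    | zero =>
      intro i h1 hiN t hxt
      have hieq : i = N + 1 := by omega
      subst hieq
      rw [hC] at hxt
      refine ⟨0, by simp, ?_⟩
      rcases hxt.1 with h | h
      · simp only [Set.mem_iUnion, exists_prop, Finset.mem_Icc] at h
        obtain ⟨j, hj, _⟩ := h
        omega
      · simpa using h
    | succ d ih =>
      intro i h1 hiN t hxt
      have hiI : i ∈ Finset.Icc 1 N := by simp only [Finset.mem_Icc]; omega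
      obtain ⟨s, hs, hxs⟩ := key i hiI t hxt
      obtain ⟨s', hs', hxs'⟩ := ih (i + 1) (by omega) (by omega) (t + s) hxs
      refine ⟨s + s', ?_, by rwa [← add_assoc]⟩
      rw [Nat.succ_mul, Nat.add_comm (d * τ) τ]
      exact Nat.add_le_add hs hs'
  obtain ⟨s, hs, hxs⟩ := main N 1 le_rfl (by omega) 0 hx0
  exact ⟨s, by simpa using hs, by simpa using hxs⟩
end

section
/- (Implicit sequence fallback) Let T0 = Fallback(TN, ..., T1) (children numbered right to left, so TN is leftmost) with regions Ri, Si, Fi partitioning X for each child, and suppose for all i < N there exists j > i with Sj ∪ Rj ⊇ Si. Then S0 = SN, and for each i, Ri ∪ Si ⊆ ∪_{j≥i} Ωj ∪ SN, where Ωi = (∩_{j>i} Fj) ∩ Ri. -/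
/-- Implicit sequence fallback. Let
`T0 = Fallback(TN, …, T1)` (children numbered right to left, `TN` leftmost),
with `Ri, Si, Fi` partitioning `X` for each child. Child `i` executes only when
all children to its left (those with `j > i`) have failed, so its influence
region (with `I0 = X`) is `Ii = ⋂_{j>i} Fj` and `Ωi = (⋂_{j>i} Fj) ∩ Ri`; the
success region of the fallback is `S0 = ⋃_i ((⋂_{j>i} Fj) ∩ Si)`. If for every
`i < N` there is `j > i` with `Si ⊆ Sj ∪ Rj`, then `S0 = SN`, and for each `i`,
`Ri ∪ Si ⊆ (⋃_{j≥i} Ωj) ∪ SN`. -/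
theorem implicit_sequence {X : Type*} (N : ℕ) (hN : 1 ≤ N)
    (R S F : ℕ → Set X)
    (hcov : ∀ i ∈ Finset.Icc 1 N, R i ∪ S i ∪ F i = Set.univ)
    (hRS : ∀ i, R i ∩ S i = ∅) (hRF : ∀ i, R i ∩ F i = ∅)
    (hSF : ∀ i, S i ∩ F i = ∅)
    (hchain : ∀ i, 1 ≤ i → i < N → ∃ j, i < j ∧ j ≤ N ∧ S i ⊆ S j ∪ R j)
    (Ω : ℕ → Set X) (hΩ : ∀ i, Ω i = (⋂ j ∈ Finset.Ioc i N, F j) ∩ R i)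
    (S0 : Set X)
    (hS0 : S0 = ⋃ i ∈ Finset.Icc 1 N, ((⋂ j ∈ Finset.Ioc i N, F j) ∩ S i)) :
    S0 = S N ∧
    ∀ i ∈ Finset.Icc 1 N, R i ∪ S i ⊆ (⋃ j ∈ Finset.Icc i N, Ω j) ∪ S N := by
  constructor
  · rw [hS0]
    apply Set.Subset.antisymm
    · intro x hx
      simp only [Set.mem_iUnion, Finset.mem_Icc] at hx
      obtain ⟨i, ⟨hi1, hiN⟩, hF, hSi⟩ := hx
      simp only [Set.mem_iInter, Finset.mem_Ioc] at hF
      rcases eq_or_lt_of_le hiN with h | h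
      · exact h ▸ hSi
      · obtain ⟨j, hij, hjN, hsub⟩ := hchain i hi1 h
        have hxF : x ∈ F j := hF j ⟨hij, hjN⟩
        rcases hsub hSi with hx' | hx'
        · exact absurd (hSF j ▸ Set.mem_inter hx' hxF) (Set.notMem_empty x)
        · exact absurd (hRF j ▸ Set.mem_inter hx' hxF) (Set.notMem_empty x)
    · intro x hx
      simp only [Set.mem_iUnion, Finset.mem_Icc]
      exact ⟨N, ⟨hN, le_refl N⟩, by simp, hx⟩
  · have key : ∀ d : ℕ, ∀ i, 1 ≤ i → i ≤ N → N - i ≤ d →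
        R i ∪ S i ⊆ (⋃ j ∈ Finset.Icc i N, Ω j) ∪ S N := by
      intro d
      induction d with
      | zero =>
        intro i hi1 hiN hd
        have hiN' : i = N := le_antisymm hiN (by omega)
        intro x hx
        rcases hx with hx | hx
        · left
          simp only [Set.mem_iUnion, Finset.mem_Icc]
          refine ⟨i, ⟨le_refl i, hiN⟩, ?_⟩
          rw [hΩ]
          refine ⟨?_, hx⟩
          simp [hiN']
        · right; exact hiN' ▸ hx
      | succ d ih =>
        intro i hi1 hiN hd
        intro x hx
        rcases hx with hx | hx
        · by_cases hall : ∀ j, i < j → j ≤ N → x ∈ F j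
          · left
            simp only [Set.mem_iUnion, Finset.mem_Icc]
            refine ⟨i, ⟨le_refl i, hiN⟩, ?_⟩
            rw [hΩ]
            refine ⟨?_, hx⟩
            simp only [Set.mem_iInter, Finset.mem_Ioc]
            exact fun j hj => hall j hj.1 hj.2
          · push_neg at hall
            obtain ⟨j, hij, hjN, hxF⟩ := hall
            have hxRS : x ∈ R j ∪ S j := by
              have := hcov j (Finset.mem_Icc.mpr ⟨by omega, hjN⟩)
              have hx' : x ∈ R j ∪ S j ∪ F j := this ▸ Set.mem_univ x
              rcases hx' with h | h
              · exact h
              · exact absurd h hxF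
            have := ih j (by omega) hjN (by omega) hxRS
            rcases this with h | h
            · left
              simp only [Set.mem_iUnion, Finset.mem_Icc] at h ⊢
              obtain ⟨k, ⟨hk1, hk2⟩, hk3⟩ := h
              exact ⟨k, ⟨by omega, hk2⟩, hk3⟩
            · right; exact h
        · rcases eq_or_lt_of_le hiN with h | h
          · right; exact h ▸ hx
          · obtain ⟨j, hij, hjN, hsub⟩ := hchain i hi1 h
            have := ih j (by omega) hjN (by omega) (Set.union_comm (S j) (R j) ▸ hsub hx)
            rcases this with h' | h'
            · left
              simp only [Set.mem_iUnion, Finset.mem_Icc] at h' ⊢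
              obtain ⟨k, ⟨hk1, hk2⟩, hk3⟩ := h'
              exact ⟨k, ⟨by omega, hk2⟩, hk3⟩
            · right; exact h'
    intro i hi
    simp only [Finset.mem_Icc] at hi
    exact key (N - i) i hi.1 hi.2 (le_refl _)
end
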